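/- arXiv:2604.26713 — 2 statements merged into one kernel-verified Lean document; each statement's English description precedes it below -/
import Mathlib

section
/- Minimality of the attractor: if S : ℝ → Set E is a family such that for every t the fibre S t is nonempty, closed and contained in A t, and S is invariant for the reachable-set operator, i.e. Φ t t₀ (S t₀) = S t for all t₀ ≤ t, then S t = A t for every t ∈ ℝ. -/
/-!
Fix a control `ξ` and pick `x₀ τ ∈ S τ`. Invariance puts
`Ψ t τ (x₀ τ) + ρ • ∫ s in Icc τ t, Ψ t s (ξ s)` in `S t` for every `τ ≤ t`. As `τ → -∞` the
first term decays exponentially, because `S ⊆ A` is uniformly bounded, while the second tends to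
`ρ • ∫ s in Iic t, Ψ t s (ξ s)`; since `S t` is closed, this point of `A t` lies in `S t`.
-/
open MeasureTheory Set Metric Pointwise
open scoped RealInnerProductSpace

noncomputable section

abbrev Euc (d : ℕ) : Type := EuclideanSpace ℝ (Fin d)

/-- The set of admissible controls: measurable functions with values in the closed unit ball. -/
def ctrlSet (d : ℕ) : Set (ℝ → Euc d) :=
  {ξ | Measurable ξ ∧ ∀ s, ‖ξ s‖ ≤ 1}

/-- The attractor fibre at time `t`. -/
def Afib (d : ℕ) (Ψ : ℝ → ℝ → (Euc d →L[ℝ] Euc d)) (ρ t : ℝ) : Set (Euc d) :=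
  {x | ∃ ξ ∈ ctrlSet d, x = ρ • ∫ s in Set.Iic t, Ψ t s (ξ s)}

/-- The reachable-set operator of the linear differential inclusion. -/
def reach (d : ℕ) (Ψ : ℝ → ℝ → (Euc d →L[ℝ] Euc d)) (ρ t t₀ : ℝ) (S : Set (Euc d)) :
    Set (Euc d) :=
  {y | ∃ x₀ ∈ S, ∃ ξ ∈ ctrlSet d, y = Ψ t t₀ x₀ + ρ • ∫ s in Set.Icc t₀ t, Ψ t s (ξ s)}

open Filter Topology

section Estimates

variable {E : Type*} [NormedAddCommGroup E] [NormedSpace ℝ E]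

lemma Real.exp_neg_mul_sub (γ τ s : ℝ) :
    Real.exp (-γ * (τ - s)) = Real.exp (-γ * τ) * Real.exp (γ * s) := by
  rw [← Real.exp_add]; ring_nf

lemma integrableOn_exp_neg_mul_sub_Iic {γ : ℝ} (hγ : 0 < γ) (τ : ℝ) :
    IntegrableOn (fun s => Real.exp (-γ * (τ - s))) (Iic τ) := by
  simp_rw [Real.exp_neg_mul_sub]
  exact (integrableOn_exp_mul_Iic hγ τ).const_mul _

lemma integral_exp_neg_mul_sub_Iic {γ : ℝ} (hγ : 0 < γ) (τ : ℝ) :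
    ∫ s in Iic τ, Real.exp (-γ * (τ - s)) = γ⁻¹ := by
  simp_rw [Real.exp_neg_mul_sub]
  rw [integral_const_mul, integral_exp_mul_Iic hγ, mul_div_assoc', ← Real.exp_add]
  simp

lemma tendsto_setIntegral_Icc_atBot {f : ℝ → E} {t : ℝ} (hf : IntegrableOn f (Iic t)) :
    Tendsto (fun τ => ∫ s in Icc τ t, f s) atBot (𝓝 (∫ s in Iic t, f s)) := by
  refine (intervalIntegral_tendsto_integral_Iic t hf tendsto_id).congr' ?_
  filter_upwards [eventually_le_atBot t] with τ hτ
  rw [integral_Icc_eq_integral_Ioc, id, intervalIntegral.integral_of_le hτ]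

variable {Ψ : ℝ → ℝ → (E →L[ℝ] E)} {K γ : ℝ}

lemma norm_apply_le_of_stable (hstab : ∀ s t, s ≤ t → ‖Ψ t s‖ ≤ K * Real.exp (-γ * (t - s)))
    {s τ : ℝ} (hs : s ≤ τ) {x : E} {C : ℝ} (hx : ‖x‖ ≤ C) :
    ‖Ψ τ s x‖ ≤ K * Real.exp (-γ * (τ - s)) * C :=
  (Ψ τ s).le_of_opNorm_le_of_le (hstab s τ hs) hx

lemma integrableOn_Iic_apply_of_stable (hγ : 0 < γ)
    (hstab : ∀ s t, s ≤ t → ‖Ψ t s‖ ≤ K * Real.exp (-γ * (t - s))) {τ : ℝ}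
    (hΨ : Continuous (Ψ τ)) {ξ : ℝ → E} (hξm : AEStronglyMeasurable ξ) (hξ : ∀ s, ‖ξ s‖ ≤ 1) :
    IntegrableOn (fun s => Ψ τ s (ξ s)) (Iic τ) := by
  refine ((integrableOn_exp_neg_mul_sub_Iic hγ τ).const_mul K).mono' ?_ ?_
  · exact (ContinuousLinearMap.id ℝ (E →L[ℝ] E)).aestronglyMeasurable_comp₂
      hΨ.aestronglyMeasurable hξm.restrict
  · filter_upwards [ae_restrict_mem measurableSet_Iic] with s hs
    simpa using norm_apply_le_of_stable hstab hs (hξ s)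

lemma norm_integral_Iic_apply_le_of_stable (hγ : 0 < γ)
    (hstab : ∀ s t, s ≤ t → ‖Ψ t s‖ ≤ K * Real.exp (-γ * (t - s))) {τ : ℝ}
    {ξ : ℝ → E} (hξ : ∀ s, ‖ξ s‖ ≤ 1) :
    ‖∫ s in Iic τ, Ψ τ s (ξ s)‖ ≤ K / γ := by
  have hbound : ∀ᵐ s ∂volume.restrict (Iic τ), ‖Ψ τ s (ξ s)‖ ≤ K * Real.exp (-γ * (τ - s)) := by
    filter_upwards [ae_restrict_mem measurableSet_Iic] with s hs
    simpa using norm_apply_le_of_stable hstab hs (hξ s)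
  calc ‖∫ s in Iic τ, Ψ τ s (ξ s)‖ ≤ ∫ s in Iic τ, K * Real.exp (-γ * (τ - s)) :=
        norm_integral_le_of_norm_le ((integrableOn_exp_neg_mul_sub_Iic hγ τ).const_mul K) hbound
    _ = K / γ := by rw [integral_const_mul, integral_exp_neg_mul_sub_Iic hγ, div_eq_mul_inv]

lemma tendsto_apply_atBot_of_stable (hγ : 0 < γ)
    (hstab : ∀ s t, s ≤ t → ‖Ψ t s‖ ≤ K * Real.exp (-γ * (t - s))) (t : ℝ)
    {x : ℝ → E} {C : ℝ} (hx : ∀ τ, ‖x τ‖ ≤ C) :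
    Tendsto (fun τ => Ψ t τ (x τ)) atBot (𝓝 0) := by
  have hexp : Tendsto (fun τ => K * Real.exp (-γ * (t - τ)) * C) atBot (𝓝 0) := by
    simp only [Real.exp_neg_mul_sub]
    have := (Real.tendsto_exp_atBot.comp (tendsto_id.const_mul_atBot hγ)).const_mul
      (K * Real.exp (-γ * t))
    simpa [mul_assoc] using this.mul_const C
  refine squeeze_zero_norm' ?_ hexp
  filter_upwards [eventually_le_atBot t] with τ hτ
  exact norm_apply_le_of_stable hstab hτ (hx τ)

end Estimates

section Attractor

variable {d : ℕ} {Ψ : ℝ → ℝ → (Euc d →L[ℝ] Euc d)} {K γ ρ : ℝ}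

lemma norm_le_of_mem_Afib (hγ : 0 < γ)
    (hstab : ∀ s t, s ≤ t → ‖Ψ t s‖ ≤ K * Real.exp (-γ * (t - s))) {τ : ℝ} {x : Euc d}
    (hx : x ∈ Afib d Ψ ρ τ) : ‖x‖ ≤ ‖ρ‖ * (K / γ) := by
  obtain ⟨ξ, hξ, rfl⟩ := hx
  rw [norm_smul]
  exact mul_le_mul_of_nonneg_left (norm_integral_Iic_apply_le_of_stable hγ hstab hξ.2)
    (norm_nonneg ρ)

theorem Afib_subset_of_reach_subset (hγ : 0 < γ)
    (hstab : ∀ s t, s ≤ t → ‖Ψ t s‖ ≤ K * Real.exp (-γ * (t - s))) {t : ℝ}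
    (hΨ : Continuous (Ψ t)) {S : ℝ → Set (Euc d)} {C : ℝ} (hSbdd : ∀ τ, ∀ x ∈ S τ, ‖x‖ ≤ C)
    (hSne : ∀ τ, (S τ).Nonempty) (hScl : IsClosed (S t))
    (hSinv : ∀ τ ≤ t, reach d Ψ ρ t τ (S τ) ⊆ S t) :
    Afib d Ψ ρ t ⊆ S t := by
  rintro _ ⟨ξ, hξ, rfl⟩
  choose x₀ hx₀ using hSne
  have hmem : ∀ᶠ τ in atBot, Ψ t τ (x₀ τ) + ρ • ∫ s in Icc τ t, Ψ t s (ξ s) ∈ S t := by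
    filter_upwards [eventually_le_atBot t] with τ hτ
    exact hSinv τ hτ ⟨x₀ τ, hx₀ τ, ξ, hξ, rfl⟩
  have hfree := tendsto_apply_atBot_of_stable hγ hstab t fun τ => hSbdd τ _ (hx₀ τ)
  have hforced := tendsto_setIntegral_Icc_atBot
    (integrableOn_Iic_apply_of_stable hγ hstab hΨ hξ.1.aestronglyMeasurable hξ.2)
  simpa using hScl.mem_of_tendsto (hfree.add (hforced.const_smul ρ)) hmem

end Attractor

theorem attractor_minimal_general
    (d : ℕ)
    (L : ℝ → (Euc d →L[ℝ] Euc d))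
    (Ψ : ℝ → ℝ → (Euc d →L[ℝ] Euc d))
    (hΨc : Continuous fun p : ℝ × ℝ => Ψ p.1 p.2)
    (K γ : ℝ) (hγ : 0 < γ)
    (hstab : ∀ s t : ℝ, s ≤ t → ‖Ψ t s‖ ≤ K * Real.exp (-γ * (t - s)))
    (ρ : ℝ)
    (S : ℝ → Set (Euc d))
    (hSne : ∀ t : ℝ, (S t).Nonempty)
    (hScl : ∀ t : ℝ, IsClosed (S t))
    (hSsub : ∀ t : ℝ, S t ⊆ Afib d Ψ ρ t)
    (hSinv : ∀ t₀ t : ℝ, t₀ ≤ t → reach d Ψ ρ t t₀ (S t₀) = S t) :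
    ∀ t : ℝ, S t = Afib d Ψ ρ t := by
  intro t
  refine (hSsub t).antisymm (Afib_subset_of_reach_subset hγ hstab (hΨc.uncurry_left t)
    (fun τ x hx => norm_le_of_mem_Afib hγ hstab (hSsub τ hx)) hSne (hScl t) ?_)
  exact fun τ hτ => (hSinv τ t hτ).le

/-- Minimality of the attractor among nonempty closed invariant subfamilies. -/
theorem attractor_minimal
    (d : ℕ) (hd : 1 ≤ d)
    (L : ℝ → (Euc d →L[ℝ] Euc d)) (hL : Continuous L)
    (Ψ : ℝ → ℝ → (Euc d →L[ℝ] Euc d))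
    (hΨc : Continuous fun p : ℝ × ℝ => Ψ p.1 p.2)
    (hΨid : ∀ t : ℝ, Ψ t t = ContinuousLinearMap.id ℝ (Euc d))
    (hΨcoc : ∀ t s r : ℝ, (Ψ t s).comp (Ψ s r) = Ψ t r)
    (hΨd : ∀ (s : ℝ) (x : Euc d) (t : ℝ), HasDerivAt (fun τ => Ψ τ s x) (L t (Ψ t s x)) t)
    (K γ : ℝ) (hK : 1 ≤ K) (hγ : 0 < γ)
    (hstab : ∀ s t : ℝ, s ≤ t → ‖Ψ t s‖ ≤ K * Real.exp (-γ * (t - s)))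
    (ρ : ℝ) (hρ : 0 < ρ)
    (S : ℝ → Set (Euc d))
    (hSne : ∀ t : ℝ, (S t).Nonempty)
    (hScl : ∀ t : ℝ, IsClosed (S t))
    (hSsub : ∀ t : ℝ, S t ⊆ Afib d Ψ ρ t)
    (hSinv : ∀ t₀ t : ℝ, t₀ ≤ t → reach d Ψ ρ t t₀ (S t₀) = S t) :
    ∀ t : ℝ, S t = Afib d Ψ ρ t :=
  attractor_minimal_general d L Ψ hΨc K γ hγ hstab ρ S hSne hScl hSsub hSinv
end
end

section
/- No two distinct points of the attractor fibre admit the same outward unit normal vector: for every t ∈ ℝ, every n ∈ E with n ≠ 0, and every x₁, x₂ ∈ A t, if ⟪n, y⟫ ≤ ⟪n, x₁⟫ for all y ∈ A t and ⟪n, y⟫ ≤ ⟪n, x₂⟫ for all y ∈ A t (i.e., both x₁ and x₂ lie on the supporting hyperplane of A t with normal n), then x₁ = x₂. -/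
/-!
Write `v s = adjoint (Ψ t s) n`. By duality
`⟪n, ρ • ∫ s in Iic t, Ψ t s (ξ s)⟫ = ρ * ∫ s in Iic t, ⟪v s, ξ s⟫`,
and `⟪v s, ξ s⟫ ≤ ‖v s‖` for every admissible control, with equality only at
`ξ s = ‖v s‖⁻¹ • v s` since the unit ball is strictly convex and `v s ≠ 0`
(`Ψ t s` has the right inverse `Ψ s t`). The bang-bang control `s ↦ ‖v s‖⁻¹ • v s` is
admissible, so every maximiser of `⟪n, ·⟫` on the fibre must use it almost everywhere,
and therefore is the point it generates.
-/

open MeasureTheory Set Metric Pointwise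
open scoped RealInnerProductSpace

noncomputable section

open ContinuousLinearMap (adjoint)

lemma integrableOn_Iic_of_norm_le_mul_exp {E : Type*} [NormedAddCommGroup E] {f : ℝ → E}
    {t γ C : ℝ} (hγ : 0 < γ) (hf : AEStronglyMeasurable f (volume.restrict (Iic t)))
    (hb : ∀ s ≤ t, ‖f s‖ ≤ C * Real.exp (-γ * (t - s))) : IntegrableOn f (Iic t) := by
  have hexp : IntegrableOn (fun s => C * Real.exp (-γ * (t - s))) (Iic t) := by
    refine IntegrableOn.congr_fun ((integrableOn_exp_mul_Iic hγ t).const_mul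
      (C * Real.exp (-γ * t))) (fun s _ => ?_) measurableSet_Iic
    rw [mul_assoc, ← Real.exp_add]
    ring_nf
  exact hexp.mono' hf ((ae_restrict_iff' measurableSet_Iic).2 (ae_of_all _ hb))

section InnerProductSpace

variable {E : Type*} [NormedAddCommGroup E] [InnerProductSpace ℝ E]

lemma real_inner_le_norm_of_norm_le_one (v : E) {ξ : E} (hξ : ‖ξ‖ ≤ 1) : ⟪v, ξ⟫ ≤ ‖v‖ :=
  (real_inner_le_norm v ξ).trans (mul_le_of_le_one_right (norm_nonneg v) hξ)

lemma real_inner_inv_norm_smul_self (v : E) : ⟪v, ‖v‖⁻¹ • v⟫ = ‖v‖ := by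
  rcases eq_or_ne v 0 with rfl | hv
  · simp
  rw [real_inner_smul_right, real_inner_self_eq_norm_sq]
  field_simp [norm_ne_zero_iff.2 hv]

lemma norm_inv_norm_smul_self {v : E} (hv : v ≠ 0) : ‖‖v‖⁻¹ • v‖ = 1 := by
  rw [norm_smul, norm_inv, norm_norm, inv_mul_cancel₀ (norm_ne_zero_iff.2 hv)]

lemma norm_inv_norm_smul_le_one (v : E) : ‖‖v‖⁻¹ • v‖ ≤ 1 := by
  rcases eq_or_ne v 0 with rfl | hv
  · simp
  exact (norm_inv_norm_smul_self hv).le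

lemma eq_inv_norm_smul_of_real_inner_eq_norm {v ξ : E} (hv : v ≠ 0) (hξ : ‖ξ‖ ≤ 1)
    (h : ⟪v, ξ⟫ = ‖v‖) : ξ = ‖v‖⁻¹ • v := by
  have hinner : ⟪ξ, ‖v‖⁻¹ • v⟫ = 1 := by
    rw [real_inner_smul_right, real_inner_comm, h, inv_mul_cancel₀ (norm_ne_zero_iff.2 hv)]
  have hsq : ‖ξ - ‖v‖⁻¹ • v‖ ^ 2 ≤ 0 := by
    rw [norm_sub_sq_real, hinner, norm_inv_norm_smul_self hv]
    nlinarith [norm_nonneg ξ]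
  rw [← sub_eq_zero, ← norm_eq_zero]
  nlinarith [norm_nonneg (ξ - ‖v‖⁻¹ • v)]

lemma ae_eq_inv_norm_smul_of_integral_norm_le {α : Type*} [MeasurableSpace α] {μ : Measure α}
    {v ξ : α → E} (hv : Integrable v μ) (hv₀ : ∀ᵐ s ∂μ, v s ≠ 0)
    (hξm : AEStronglyMeasurable ξ μ) (hξ : ∀ᵐ s ∂μ, ‖ξ s‖ ≤ 1)
    (h : ∫ s, ‖v s‖ ∂μ ≤ ∫ s, ⟪v s, ξ s⟫ ∂μ) : ξ =ᵐ[μ] fun s => ‖v s‖⁻¹ • v s := by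
  have hint : Integrable (fun s => ⟪v s, ξ s⟫) μ :=
    hv.norm.mono' (hv.1.inner hξm) <| hξ.mono fun s hs =>
      (norm_inner_le_norm _ _).trans (mul_le_of_le_one_right (norm_nonneg _) hs)
  have hgap_nonneg : 0 ≤ᵐ[μ] fun s => ‖v s‖ - ⟪v s, ξ s⟫ :=
    hξ.mono fun s hs => sub_nonneg.2 (real_inner_le_norm_of_norm_le_one _ hs)
  have hgap : (fun s => ‖v s‖ - ⟪v s, ξ s⟫) =ᵐ[μ] 0 := by
    refine (integral_eq_zero_iff_of_nonneg_ae hgap_nonneg (hv.norm.sub hint)).1 ?_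
    refine le_antisymm ?_ (integral_nonneg_of_ae hgap_nonneg)
    rwa [integral_sub hv.norm hint, sub_nonpos]
  filter_upwards [hv₀, hξ, hgap] with s hvs hξs hgs
  exact eq_inv_norm_smul_of_real_inner_eq_norm hvs hξs (sub_eq_zero.1 hgs).symm

end InnerProductSpace

section Adjoint

variable {𝕜 E F : Type*} [RCLike 𝕜] [NormedAddCommGroup E] [InnerProductSpace 𝕜 E]
  [CompleteSpace E] [NormedAddCommGroup F] [InnerProductSpace 𝕜 F] [CompleteSpace F]

lemma ContinuousLinearMap.adjoint_apply_ne_zero_of_comp_eq_id {A : E →L[𝕜] F} {B : F →L[𝕜] E}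
    (hAB : A ∘L B = ContinuousLinearMap.id 𝕜 F) {n : F} (hn : n ≠ 0) : adjoint A n ≠ 0 := by
  intro h
  have := A.adjoint_inner_left (B n) n
  rw [h, inner_zero_left, ← ContinuousLinearMap.comp_apply, hAB,
    ContinuousLinearMap.id_apply] at this
  exact hn (inner_self_eq_zero.1 this.symm)

lemma ContinuousLinearMap.norm_adjoint_apply_le (A : E →L[𝕜] F) (n : F) :
    ‖adjoint A n‖ ≤ ‖A‖ * ‖n‖ := by
  simpa only [LinearIsometryEquiv.norm_map] using (adjoint A).le_opNorm n

end Adjoint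

lemma inner_integral_clm_apply {E F α : Type*} [NormedAddCommGroup E] [InnerProductSpace ℝ E]
    [CompleteSpace E] [NormedAddCommGroup F] [InnerProductSpace ℝ F] [CompleteSpace F]
    [MeasurableSpace α] {μ : Measure α}
    {A : α → E →L[ℝ] F} {f : α → E} (hf : Integrable (fun s => A s (f s)) μ) (n : F) :
    ⟪n, ∫ s, A s (f s) ∂μ⟫ = ∫ s, ⟪adjoint (A s) n, f s⟫ ∂μ := by
  simp only [← integral_inner hf n, ContinuousLinearMap.adjoint_inner_left]

section Attractor

variable {d : ℕ} {Ψ : ℝ → ℝ → (Euc d →L[ℝ] Euc d)} {t K γ ρ : ℝ}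

lemma integrableOn_evolution_apply (hΨ : Continuous (Ψ t)) (hγ : 0 < γ)
    (hstab : ∀ s ≤ t, ‖Ψ t s‖ ≤ K * Real.exp (-γ * (t - s))) {ξ : ℝ → Euc d}
    (hξ : ξ ∈ ctrlSet d) : IntegrableOn (fun s => Ψ t s (ξ s)) (Iic t) := by
  have hm : Measurable fun s => Ψ t s (ξ s) := by
    have hξm := hξ.1
    fun_prop
  refine integrableOn_Iic_of_norm_le_mul_exp (C := K) hγ hm.aestronglyMeasurable fun s hs => ?_
  calc ‖Ψ t s (ξ s)‖ ≤ ‖Ψ t s‖ * ‖ξ s‖ := (Ψ t s).le_opNorm _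
    _ ≤ ‖Ψ t s‖ := mul_le_of_le_one_right (norm_nonneg _) (hξ.2 s)
    _ ≤ K * Real.exp (-γ * (t - s)) := hstab s hs

lemma integrableOn_adjoint_evolution_apply (hΨ : Continuous (Ψ t)) (hγ : 0 < γ)
    (hstab : ∀ s ≤ t, ‖Ψ t s‖ ≤ K * Real.exp (-γ * (t - s))) (n : Euc d) :
    IntegrableOn (fun s => adjoint (Ψ t s) n) (Iic t) := by
  have hcont : Continuous fun s => adjoint (Ψ t s) n :=
    (ContinuousLinearMap.adjoint.continuous.comp hΨ).clm_apply continuous_const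
  refine integrableOn_Iic_of_norm_le_mul_exp (C := K * ‖n‖) hγ
    hcont.aestronglyMeasurable fun s hs => ?_
  calc ‖adjoint (Ψ t s) n‖ ≤ ‖Ψ t s‖ * ‖n‖ := (Ψ t s).norm_adjoint_apply_le n
    _ ≤ K * Real.exp (-γ * (t - s)) * ‖n‖ := by gcongr; exact hstab s hs
    _ = K * ‖n‖ * Real.exp (-γ * (t - s)) := by ring

variable (Ψ t) in
def bangBang (n : Euc d) (s : ℝ) : Euc d :=
  ‖adjoint (Ψ t s) n‖⁻¹ • adjoint (Ψ t s) n

lemma bangBang_mem_ctrlSet (hΨ : Continuous (Ψ t)) (n : Euc d) : bangBang Ψ t n ∈ ctrlSet d := by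
  have hm : Measurable fun s => adjoint (Ψ t s) n :=
    ((ContinuousLinearMap.adjoint.continuous.comp hΨ).clm_apply continuous_const).measurable
  exact ⟨by unfold bangBang; fun_prop, fun s => norm_inv_norm_smul_le_one _⟩

lemma eq_integral_bangBang_of_forall_inner_le (hΨ : Continuous (Ψ t))
    (hΨinv : ∀ s, Ψ t s ∘L Ψ s t = ContinuousLinearMap.id ℝ (Euc d)) (hγ : 0 < γ)
    (hstab : ∀ s ≤ t, ‖Ψ t s‖ ≤ K * Real.exp (-γ * (t - s))) (hρ : 0 < ρ) {n : Euc d}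
    (hn : n ≠ 0) {x : Euc d} (hx : x ∈ Afib d Ψ ρ t)
    (hmax : ∀ y ∈ Afib d Ψ ρ t, ⟪n, y⟫ ≤ ⟪n, x⟫) :
    x = ρ • ∫ s in Iic t, Ψ t s (bangBang Ψ t n s) := by
  obtain ⟨ξ, hξ, rfl⟩ := hx
  have hbb := bangBang_mem_ctrlSet hΨ n
  have hle := hmax _ ⟨_, hbb, rfl⟩
  rw [real_inner_smul_right, real_inner_smul_right,
    inner_integral_clm_apply (integrableOn_evolution_apply hΨ hγ hstab hξ),
    inner_integral_clm_apply (integrableOn_evolution_apply hΨ hγ hstab hbb)] at hle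
  simp only [bangBang, real_inner_inv_norm_smul_self] at hle
  have hae := ae_eq_inv_norm_smul_of_integral_norm_le
    (integrableOn_adjoint_evolution_apply hΨ hγ hstab n)
    (ae_of_all _ fun s => ContinuousLinearMap.adjoint_apply_ne_zero_of_comp_eq_id (hΨinv s) hn)
    hξ.1.aestronglyMeasurable (ae_of_all _ hξ.2) (le_of_mul_le_mul_left hle hρ)
  exact congrArg (ρ • ·) (integral_congr_ae (hae.mono fun s hs => congrArg (Ψ t s) hs))

end Attractor

theorem attractor_no_common_normal_general
    (d : ℕ)
    (L : ℝ → (Euc d →L[ℝ] Euc d))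
    (Ψ : ℝ → ℝ → (Euc d →L[ℝ] Euc d))
    (hΨc : Continuous fun p : ℝ × ℝ => Ψ p.1 p.2)
    (hΨid : ∀ t : ℝ, Ψ t t = ContinuousLinearMap.id ℝ (Euc d))
    (hΨcoc : ∀ t s r : ℝ, (Ψ t s).comp (Ψ s r) = Ψ t r)
    (K γ : ℝ) (hγ : 0 < γ)
    (hstab : ∀ s t : ℝ, s ≤ t → ‖Ψ t s‖ ≤ K * Real.exp (-γ * (t - s)))
    (ρ : ℝ) (hρ : 0 < ρ) :
    ∀ t : ℝ, ∀ n : Euc d, n ≠ 0 →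
      ∀ x₁ ∈ Afib d Ψ ρ t, ∀ x₂ ∈ Afib d Ψ ρ t,
        (∀ y ∈ Afib d Ψ ρ t, ⟪n, y⟫ ≤ ⟪n, x₁⟫) →
        (∀ y ∈ Afib d Ψ ρ t, ⟪n, y⟫ ≤ ⟪n, x₂⟫) →
        x₁ = x₂ := by
  intro t n hn x₁ hx₁ x₂ hx₂ hmax₁ hmax₂
  have hΨt : Continuous (Ψ t) := hΨc.comp (Continuous.prodMk_right t)
  have hΨinv : ∀ s, Ψ t s ∘L Ψ s t = ContinuousLinearMap.id ℝ (Euc d) := fun s =>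
    (hΨcoc t s t).trans (hΨid t)
  have hstab_t : ∀ s ≤ t, ‖Ψ t s‖ ≤ K * Real.exp (-γ * (t - s)) := fun s hs => hstab s t hs
  rw [eq_integral_bangBang_of_forall_inner_le hΨt hΨinv hγ hstab_t hρ hn hx₁ hmax₁,
    eq_integral_bangBang_of_forall_inner_le hΨt hΨinv hγ hstab_t hρ hn hx₂ hmax₂]

/-- No two distinct points of an attractor fibre admit the same outward unit normal. -/
theorem attractor_no_common_normal
    (d : ℕ) (hd : 1 ≤ d)
    (L : ℝ → (Euc d →L[ℝ] Euc d)) (hL : Continuous L)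
    (Ψ : ℝ → ℝ → (Euc d →L[ℝ] Euc d))
    (hΨc : Continuous fun p : ℝ × ℝ => Ψ p.1 p.2)
    (hΨid : ∀ t : ℝ, Ψ t t = ContinuousLinearMap.id ℝ (Euc d))
    (hΨcoc : ∀ t s r : ℝ, (Ψ t s).comp (Ψ s r) = Ψ t r)
    (hΨd : ∀ (s : ℝ) (x : Euc d) (t : ℝ), HasDerivAt (fun τ => Ψ τ s x) (L t (Ψ t s x)) t)
    (K γ : ℝ) (hK : 1 ≤ K) (hγ : 0 < γ)
    (hstab : ∀ s t : ℝ, s ≤ t → ‖Ψ t s‖ ≤ K * Real.exp (-γ * (t - s)))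
    (ρ : ℝ) (hρ : 0 < ρ) :
    ∀ t : ℝ, ∀ n : Euc d, n ≠ 0 →
      ∀ x₁ ∈ Afib d Ψ ρ t, ∀ x₂ ∈ Afib d Ψ ρ t,
        (∀ y ∈ Afib d Ψ ρ t, ⟪n, y⟫ ≤ ⟪n, x₁⟫) →
        (∀ y ∈ Afib d Ψ ρ t, ⟪n, y⟫ ≤ ⟪n, x₂⟫) →
        x₁ = x₂ :=
  attractor_no_common_normal_general d L Ψ hΨc hΨid hΨcoc K γ hγ hstab ρ hρ
end
end
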